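/- For all integers n ≥ 0 and k ≥ 0, the number of overpartition (2k+1)-tuples with odd parts satisfies OPT_{2k+1}(8n+2) ≡ 0 (mod 2). -/

import Mathlib

/-- An overpartition with odd parts, encoded as a pair of multisets of odd
(hence positive) integers: the overlined parts (which are distinct, since the
last occurrence of each part size may be overlined) and the non-overlined
parts. -/
def IsOddOverpartition (p : Multiset ℕ × Multiset ℕ) : Prop :=
  p.1.Nodup ∧ (∀ x ∈ p.1, Odd x) ∧ (∀ x ∈ p.2, Odd x)

/-- `OPT k n` is the number of overpartition `k`-tuples of `n` with odd parts,
with generating function `∏_{i≥1} ((1+q^{2i-1})/(1-q^{2i-1}))^k`. -/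
noncomputable def OPT (k n : ℕ) : ℕ :=
  Set.ncard {f : Fin k → Multiset ℕ × Multiset ℕ |
    (∀ i, IsOddOverpartition (f i)) ∧ (∑ i, ((f i).1.sum + (f i).2.sum)) = n}

/-!
Moving the largest part of an overpartition between its overlined and non-overlined parts (i.e.
toggling the overline on its last occurrence) is an involution without fixed points on nonempty
overpartitions, and it preserves the parts and their sum. Applied componentwise to a tuple of
positive weight it pairs off the tuples counted by `OPT k n`, so `OPT k n` is even for every
`n ≠ 0`.
-/

theorem Set.even_ncard_of_involution {α : Type*} {s : Set α} (σ : α → α)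
    (maps_to : ∀ x ∈ s, σ x ∈ s) (involutive : ∀ x ∈ s, σ (σ x) = x)
    (ne_self : ∀ x ∈ s, σ x ≠ x) : Even s.ncard := by
  rcases s.finite_or_infinite with hs | hs
  · rw [Set.ncard_eq_toFinset_card s hs, ← ZMod.natCast_eq_zero_iff_even, ← nsmul_one,
      ← Finset.sum_const]
    refine Finset.sum_involution (fun x _ => σ x) (fun _ _ => by decide)
      (fun x hx _ => ne_self x (hs.mem_toFinset.1 hx))
      (fun x hx => hs.mem_toFinset.2 (maps_to x (hs.mem_toFinset.1 hx)))
      (fun x hx => involutive x (hs.mem_toFinset.1 hx))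
  · -- junk value: an infinite set has `ncard = 0`
    rw [hs.ncard]
    exact Even.zero

theorem Multiset.sup_mem_of_ne_zero {α : Type*} [LinearOrder α] [OrderBot α] {s : Multiset α}
    (hs : s ≠ 0) : s.sup ∈ s := by
  obtain ⟨x, hx, hmax⟩ := s.exists_max_image id hs
  rwa [le_antisymm (Multiset.sup_le.2 hmax) (Multiset.le_sup hx)]

theorem Multiset.erase_add_cons_of_mem {α : Type*} [DecidableEq α] {a b : Multiset α} {m : α}
    (ha : m ∈ a) : a.erase m + m ::ₘ b = a + b := by
  rw [Multiset.add_cons, ← Multiset.cons_add, Multiset.cons_erase ha]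

namespace Overpartition

variable {α : Type*} [LinearOrder α] [OrderBot α] {a b : Multiset α}

def toggleLargest (p : Multiset α × Multiset α) : Multiset α × Multiset α :=
  let m := (p.1 + p.2).sup
  if m ∈ p.1 then (p.1.erase m, m ::ₘ p.2)
  else if m ∈ p.2 then (m ::ₘ p.1, p.2.erase m)
  else p

theorem toggleLargest_of_mem_fst {m : α} (hm : (a + b).sup = m) (ha : m ∈ a) :
    toggleLargest (a, b) = (a.erase m, m ::ₘ b) := by
  subst hm
  exact if_pos ha

theorem toggleLargest_of_mem_snd {m : α} (hm : (a + b).sup = m) (ha : m ∉ a) (hb : m ∈ b) :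
    toggleLargest (a, b) = (m ::ₘ a, b.erase m) := by
  subst hm
  rw [toggleLargest, if_neg ha, if_pos hb]

theorem toggleLargest_zero : toggleLargest ((0, 0) : Multiset α × Multiset α) = (0, 0) := by
  simp [toggleLargest]

theorem sup_mem_snd_of_notMem_fst (h0 : a + b ≠ 0) (ha : (a + b).sup ∉ a) : (a + b).sup ∈ b :=
  (Multiset.mem_add.1 (Multiset.sup_mem_of_ne_zero h0)).resolve_left ha

theorem fst_add_snd_toggleLargest (p : Multiset α × Multiset α) :
    (toggleLargest p).1 + (toggleLargest p).2 = p.1 + p.2 := by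
  obtain ⟨a, b⟩ := p
  by_cases ha : (a + b).sup ∈ a
  · rw [toggleLargest_of_mem_fst rfl ha, Multiset.erase_add_cons_of_mem ha]
  by_cases hb : (a + b).sup ∈ b
  · rw [toggleLargest_of_mem_snd rfl ha hb, add_comm, Multiset.erase_add_cons_of_mem hb,
      add_comm]
  · simp only [toggleLargest, if_neg ha, if_neg hb]

theorem toggleLargest_toggleLargest {p : Multiset α × Multiset α} (hp : p.1.Nodup) :
    toggleLargest (toggleLargest p) = p := by
  obtain ⟨a, b⟩ := p
  rcases eq_or_ne (a + b) 0 with h0 | h0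
  · obtain ⟨rfl, rfl⟩ := add_eq_zero.1 h0
    rw [toggleLargest_zero, toggleLargest_zero]
  by_cases ha : (a + b).sup ∈ a
  · rw [toggleLargest_of_mem_fst rfl ha,
      toggleLargest_of_mem_snd (by rw [Multiset.erase_add_cons_of_mem ha]) hp.notMem_erase
        (Multiset.mem_cons_self _ _),
      Multiset.cons_erase ha, Multiset.erase_cons_head]
  · have hb := sup_mem_snd_of_notMem_fst h0 ha
    rw [toggleLargest_of_mem_snd rfl ha hb,
      toggleLargest_of_mem_fst (by rw [add_comm, Multiset.erase_add_cons_of_mem hb, add_comm])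
        (Multiset.mem_cons_self _ _),
      Multiset.cons_erase hb, Multiset.erase_cons_head]

theorem nodup_fst_toggleLargest {p : Multiset α × Multiset α} (hp : p.1.Nodup) :
    (toggleLargest p).1.Nodup := by
  obtain ⟨a, b⟩ := p
  by_cases ha : (a + b).sup ∈ a
  · rw [toggleLargest_of_mem_fst rfl ha]
    exact hp.erase _
  by_cases hb : (a + b).sup ∈ b
  · rw [toggleLargest_of_mem_snd rfl ha hb]
    exact Multiset.nodup_cons.2 ⟨ha, hp⟩
  · simpa only [toggleLargest, if_neg ha, if_neg hb] using hp

theorem toggleLargest_ne_self {p : Multiset α × Multiset α} (hp : p.1.Nodup)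
    (h0 : p.1 + p.2 ≠ 0) : toggleLargest p ≠ p := by
  obtain ⟨a, b⟩ := p
  intro h
  by_cases ha : (a + b).sup ∈ a
  · rw [toggleLargest_of_mem_fst rfl ha] at h
    have := hp.notMem_erase (a := (a + b).sup)
    rw [(Prod.mk.inj h).1] at this
    exact this ha
  · rw [toggleLargest_of_mem_snd rfl ha (sup_mem_snd_of_notMem_fst h0 ha)] at h
    have := Multiset.mem_cons_self (a + b).sup a
    rw [(Prod.mk.inj h).1] at this
    exact ha this

end Overpartition

open Overpartition

theorem IsOddOverpartition.toggleLargest {p : Multiset ℕ × Multiset ℕ}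
    (hp : IsOddOverpartition p) : IsOddOverpartition (Overpartition.toggleLargest p) := by
  have hodd :
      ∀ x ∈ (Overpartition.toggleLargest p).1 + (Overpartition.toggleLargest p).2, Odd x := by
    rw [fst_add_snd_toggleLargest]
    intro x hx
    rcases Multiset.mem_add.1 hx with h | h
    exacts [hp.2.1 x h, hp.2.2 x h]
  exact ⟨nodup_fst_toggleLargest hp.1, fun x hx => hodd x (Multiset.mem_add.2 (.inl hx)),
    fun x hx => hodd x (Multiset.mem_add.2 (.inr hx))⟩

theorem even_OPT (k : ℕ) {n : ℕ} (hn : n ≠ 0) : Even (OPT k n) := by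
  have hweight (p : Multiset ℕ × Multiset ℕ) :
      (toggleLargest p).1.sum + (toggleLargest p).2.sum = p.1.sum + p.2.sum := by
    rw [← Multiset.sum_add, ← Multiset.sum_add, fst_add_snd_toggleLargest]
  refine Set.even_ncard_of_involution (fun f i => toggleLargest (f i)) ?_ ?_ ?_
  · rintro f ⟨hodd, hsum⟩
    exact ⟨fun i => (hodd i).toggleLargest, by simp only [hweight, hsum]⟩
  · rintro f ⟨hodd, -⟩
    funext i
    exact toggleLargest_toggleLargest (hodd i).1
  · rintro f ⟨hodd, hsum⟩ h
    obtain ⟨i, -, hi⟩ := Finset.exists_ne_zero_of_sum_ne_zero (hsum ▸ hn)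
    refine toggleLargest_ne_self (hodd i).1 (fun h0 => hi ?_) (congrFun h i)
    rw [← Multiset.sum_add, h0, Multiset.sum_zero]

/-- For all `n ≥ 0` and `k ≥ 0`, `OPT_{2k+1}(8n+2) ≡ 0 (mod 2)`. -/
theorem opt_odd_tuple_8n_plus_2 (n k : ℕ) :
    OPT (2 * k + 1) (8 * n + 2) ≡ 0 [MOD 2] :=
  Nat.modEq_zero_iff_dvd.2 (even_iff_two_dvd.1 (even_OPT _ (by omega)))
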